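/- Let X_{ij}, i ∈ {1,...,n}, j ∈ {1,...,p}, be iid Rademacher random variables, T_n = n^{-1/2} Σ_{i=1}^n X_i, and A = (−∞, √n]^p. Then P(T_n ∈ A) = 1; moreover, [Φ(√n)]^p ≤ [1 − 2 e^{−n/2} / (√(2π)(√(n+4) + √n))]^p, and if p ≥ √(π/2)(√(n+4) + √n) e^{n/2}, then [Φ(√n)]^p ≤ 2/e for all sufficiently large n. Consequently, under this growth of p, ρ_{n,A^re} ≥ 1 − 2/e for all sufficiently large n. -/

import Mathlib

open MeasureTheory ProbabilityTheory Filter Real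

/-- The Rademacher distribution on `ℝ`: `P({1}) = P({-1}) = 1/2`. -/
noncomputable def radMeasure : Measure ℝ :=
  (2⁻¹ : ENNReal) • Measure.dirac (1 : ℝ) + (2⁻¹ : ENNReal) • Measure.dirac (-1 : ℝ)

/-- The distribution of a `p`-dimensional standard Gaussian random vector. -/
noncomputable def stdGaussianPi (p : ℕ) : Measure (Fin p → ℝ) :=
  Measure.pi fun _ => gaussianReal 0 1

/-- The hyper-rectangle `∏_{j=1}^p ([a_j, b_j] ∩ ℝ)` with extended-real endpoints. -/
def rect {p : ℕ} (a b : Fin p → EReal) : Set (Fin p → ℝ) :=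
  {x | ∀ j, a j ≤ (x j : EReal) ∧ (x j : EReal) ≤ b j}

/-- `ρ_{n,𝒜^{re}}`. -/
noncomputable def rhoRe {Ω : Type*} [MeasurableSpace Ω] (μ : Measure Ω) {p : ℕ}
    (T : Ω → Fin p → ℝ) : ℝ :=
  ⨆ (a : Fin p → EReal) (b : Fin p → EReal),
    |(μ (T ⁻¹' rect a b)).toReal - (stdGaussianPi p (rect a b)).toReal|

/-- `Φ`, the standard normal cumulative distribution function. -/
noncomputable def Phi (t : ℝ) : ℝ := ((gaussianReal 0 1) (Set.Iic t)).toReal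

/-!
Every entry of `X_i` is at most `1`, so each coordinate of `T_n` is almost surely at most
`n / √n = √n`, i.e. `P(T_n ∈ (−∞, √n]^p) = 1`. On the Gaussian side, Birnbaum's lower bound
`1 − Φ(t) ≥ φ(t) · 2 / (√(t² + 4) + t)` on the Mills ratio (for `t ≥ 0`: the derivative of
`−φ(x) · 2 / (√(x² + 4) + x)` lies between `0` and `φ(x)`) gives `Φ(√n) ≤ 1 − c_n` with
`c_n = 2e^{−n/2} / (√(2π)(√(n+4) + √n))`; the growth condition is exactly `c_n p ≥ 1`, whence
`Φ(√n)^p ≤ (1 − c_n)^p ≤ e^{−c_n p} ≤ e^{−1}`. The rectangle `(−∞, √n]^p` then witnesses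
`ρ_{n,𝒜^{re}} ≥ 1 − Φ(√n)^p ≥ 1 − 2/e`.
-/

open scoped Topology

lemma ae_le_one_of_map_eq_radMeasure {Ω : Type*} [MeasurableSpace Ω] {μ : Measure Ω}
    {Y : Ω → ℝ} (hY : μ.map Y = radMeasure) : ∀ᵐ ω ∂μ, Y ω ≤ 1 := by
  have hY_meas : AEMeasurable Y μ := by
    refine .of_map_ne_zero fun h0 => ?_
    have := congrArg (fun ν : Measure ℝ => ν {1}) (hY.symm.trans h0)
    simp [radMeasure] at this
  refine ae_of_ae_map (p := fun y => y ≤ 1) hY_meas ?_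
  rw [hY]
  simp [radMeasure]

lemma inv_sqrt_mul_sum_le_sqrt {n : ℕ} {x : Fin n → ℝ} (hx : ∀ i, x i ≤ 1) :
    (√n)⁻¹ * ∑ i, x i ≤ √n := by
  have hsum : ∑ i, x i ≤ n := by
    simpa using Finset.sum_le_sum fun i (_ : i ∈ Finset.univ) => hx i
  rcases n.eq_zero_or_pos with rfl | hn
  · simp
  have hpos : 0 < √(n : ℝ) := Real.sqrt_pos.mpr (by exact_mod_cast hn)
  rw [inv_mul_le_iff₀ hpos, Real.mul_self_sqrt n.cast_nonneg]
  exact hsum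

lemma measure_setOf_eq_one_of_ae {Ω : Type*} [MeasurableSpace Ω] {μ : Measure Ω}
    [IsProbabilityMeasure μ] {P : Ω → Prop} (h : ∀ᵐ ω ∂μ, P ω) : μ {ω | P ω} = 1 := by
  rw [measure_congr (ae_eq_univ.mpr h), measure_univ]

/-- Birnbaum's lower bound for the Mills ratio `(1 − Φ(x)) / φ(x)`. -/
noncomputable def millsLowerBound (x : ℝ) : ℝ := 2 / (√(x ^ 2 + 4) + x)

lemma sqrt_sq_add_four_add_pos {x : ℝ} (hx : 0 ≤ x) : 0 < √(x ^ 2 + 4) + x := by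
  have : 0 < √(x ^ 2 + 4) := Real.sqrt_pos.mpr (by positivity)
  linarith

lemma millsLowerBound_nonneg {x : ℝ} (hx : 0 ≤ x) : 0 ≤ millsLowerBound x :=
  div_nonneg zero_le_two (sqrt_sq_add_four_add_pos hx).le

lemma hasDerivAt_millsLowerBound {x : ℝ} (hx : 0 ≤ x) :
    HasDerivAt millsLowerBound (-millsLowerBound x / √(x ^ 2 + 4)) x := by
  have hq : 0 < x ^ 2 + 4 := by positivity
  have hs : 0 < √(x ^ 2 + 4) := Real.sqrt_pos.mpr hq
  have hsx := sqrt_sq_add_four_add_pos hx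
  have hsqrt : HasDerivAt (fun y => √(y ^ 2 + 4)) (x / √(x ^ 2 + 4)) x := by
    convert ((hasDerivAt_pow 2 x).add_const 4).sqrt hq.ne' using 1
    field_simp
    ring
  show HasDerivAt (fun y => 2 / (√(y ^ 2 + 4) + y)) _ x
  refine ((hasDerivAt_const x (2 : ℝ)).div (hsqrt.add (hasDerivAt_id' x)) hsx.ne').congr_deriv ?_
  simp only [Pi.add_apply, millsLowerBound]
  field_simp
  ring

lemma millsLowerBound_mul_le_one {x : ℝ} (hx : 0 ≤ x) :
    millsLowerBound x * (x + 1 / √(x ^ 2 + 4)) ≤ 1 := by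
  have hq : 0 < x ^ 2 + 4 := by positivity
  have hs : 0 < √(x ^ 2 + 4) := Real.sqrt_pos.mpr hq
  have hs2 : √(x ^ 2 + 4) ^ 2 = x ^ 2 + 4 := Real.sq_sqrt hq.le
  have hsx := sqrt_sq_add_four_add_pos hx
  -- `(x² + 2)² = x²(x² + 4) + 4`
  have key : x * √(x ^ 2 + 4) ≤ x ^ 2 + 2 := by
    nlinarith [sq_nonneg (x * √(x ^ 2 + 4) - (x ^ 2 + 2))]
  have hdiff : √(x ^ 2 + 4) + x - 2 * (x + 1 / √(x ^ 2 + 4))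
      = (x ^ 2 + 2 - x * √(x ^ 2 + 4)) / √(x ^ 2 + 4) := by
    field_simp
    linear_combination hs2
  rw [millsLowerBound, div_mul_eq_mul_div, div_le_one hsx, ← sub_nonneg, hdiff]
  exact div_nonneg (by linarith) hs.le

lemma tendsto_millsLowerBound_atTop : Tendsto millsLowerBound atTop (𝓝 0) := by
  refine tendsto_const_nhds.div_atTop (tendsto_atTop_mono (fun x => ?_) tendsto_id)
  exact le_add_of_nonneg_left (Real.sqrt_nonneg _)

lemma gaussianPDFReal_zero_one (x : ℝ) :
    gaussianPDFReal 0 1 x = (√(2 * π))⁻¹ * exp (-x ^ 2 / 2) := by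
  simp [gaussianPDFReal]

lemma hasDerivAt_gaussianPDFReal_zero_one (x : ℝ) :
    HasDerivAt (gaussianPDFReal 0 1) (-x * gaussianPDFReal 0 1 x) x := by
  rw [show gaussianPDFReal 0 1 = fun y => (√(2 * π))⁻¹ * exp (-y ^ 2 / 2) from
    funext gaussianPDFReal_zero_one]
  refine ((((hasDerivAt_pow 2 x).neg.div_const 2).exp).const_mul (√(2 * π))⁻¹).congr_deriv ?_
  simp only [Pi.neg_apply]
  push_cast
  ring

lemma tendsto_gaussianPDFReal_zero_one_atTop :
    Tendsto (gaussianPDFReal 0 1) atTop (𝓝 0) := by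
  have hexp : Tendsto (fun y : ℝ => -y ^ 2 / 2) atTop atBot :=
    (tendsto_neg_atTop_atBot.comp (tendsto_pow_atTop two_ne_zero)).atBot_div_const two_pos
  simpa [funext gaussianPDFReal_zero_one] using
    (Real.tendsto_exp_atBot.comp hexp).const_mul (√(2 * π))⁻¹

lemma sub_le_setIntegral_Ioi_of_hasDerivAt {G g f : ℝ → ℝ} {t l : ℝ}
    (hG : ∀ x ∈ Set.Ici t, HasDerivAt G (g x) x) (hg : ∀ x ∈ Set.Ioi t, 0 ≤ g x)
    (hgf : ∀ x ∈ Set.Ioi t, g x ≤ f x) (hf : IntegrableOn f (Set.Ioi t))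
    (hGl : Tendsto G atTop (𝓝 l)) : l - G t ≤ ∫ x in Set.Ioi t, f x := by
  rw [← integral_Ioi_of_hasDerivAt_of_nonneg' hG hg hGl]
  exact setIntegral_mono_on (integrableOn_Ioi_deriv_of_nonneg' hG hg hGl) hf measurableSet_Ioi hgf

lemma gaussianPDFReal_mul_millsLowerBound_le {t : ℝ} (ht : 0 ≤ t) :
    gaussianPDFReal 0 1 t * millsLowerBound t ≤ (gaussianReal 0 1 (Set.Ioi t)).toReal := by
  have hG : ∀ x ∈ Set.Ici t, HasDerivAt (fun y => -(gaussianPDFReal 0 1 y * millsLowerBound y))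
      (gaussianPDFReal 0 1 x * millsLowerBound x * (x + 1 / √(x ^ 2 + 4))) x := by
    intro x hx
    refine ((hasDerivAt_gaussianPDFReal_zero_one x).mul
      (hasDerivAt_millsLowerBound (ht.trans hx))).neg.congr_deriv ?_
    ring
  have hlim : Tendsto (fun y => -(gaussianPDFReal 0 1 y * millsLowerBound y)) atTop (𝓝 0) := by
    simpa using (tendsto_gaussianPDFReal_zero_one_atTop.mul tendsto_millsLowerBound_atTop).neg
  have hbound := sub_le_setIntegral_Ioi_of_hasDerivAt hG
    (fun x hx => have hx0 := ht.trans (le_of_lt hx)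
      mul_nonneg (mul_nonneg (gaussianPDFReal_nonneg 0 1 x) (millsLowerBound_nonneg hx0))
        (by positivity))
    (fun x hx => by
      rw [mul_assoc]
      exact mul_le_of_le_one_right (gaussianPDFReal_nonneg 0 1 x)
        (millsLowerBound_mul_le_one (ht.trans (le_of_lt hx))))
    (integrable_gaussianPDFReal 0 1).integrableOn hlim
  rw [gaussianReal_apply_eq_integral 0 one_ne_zero, ENNReal.toReal_ofReal
    (setIntegral_nonneg measurableSet_Ioi fun x _ => gaussianPDFReal_nonneg 0 1 x)]
  simpa using hbound

lemma Phi_nonneg (t : ℝ) : 0 ≤ Phi t := ENNReal.toReal_nonneg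

lemma Phi_le_one_sub {t : ℝ} (ht : 0 ≤ t) :
    Phi t ≤ 1 - gaussianPDFReal 0 1 t * millsLowerBound t := by
  have hcompl : (gaussianReal 0 1 (Set.Ioi t)).toReal = 1 - Phi t := by
    rw [← Set.compl_Iic, prob_compl_eq_one_sub measurableSet_Iic,
      ENNReal.toReal_sub_of_le prob_le_one ENNReal.one_ne_top, ENNReal.toReal_one, Phi]
  linarith [gaussianPDFReal_mul_millsLowerBound_le ht]

lemma Phi_sqrt_le {x : ℝ} (hx : 0 ≤ x) :
    Phi √x ≤ 1 - 2 * exp (-x / 2) / (√(2 * π) * (√(x + 4) + √x)) := by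
  convert Phi_le_one_sub (Real.sqrt_nonneg x) using 2
  rw [gaussianPDFReal_zero_one, millsLowerBound, Real.sq_sqrt hx]
  field_simp

lemma pow_le_exp_neg_one {x c : ℝ} {p : ℕ} (hx0 : 0 ≤ x) (hx : x ≤ 1 - c) (hcp : 1 ≤ c * p) :
    x ^ p ≤ exp (-1) :=
  calc x ^ p ≤ exp (-c) ^ p := pow_le_pow_left₀ hx0 (hx.trans (Real.one_sub_le_exp_neg c)) p
    _ = exp (-(c * p)) := by rw [← Real.exp_nat_mul]; ring_nf
    _ ≤ exp (-1) := Real.exp_le_exp.mpr (neg_le_neg hcp)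

lemma Phi_sqrt_pow_le_exp_neg_one {x : ℝ} (hx : 0 ≤ x) {p : ℕ}
    (hp : √(π / 2) * (√(x + 4) + √x) * exp (x / 2) ≤ p) : Phi √x ^ p ≤ exp (-1) := by
  set c := 2 * exp (-x / 2) / (√(2 * π) * (√(x + 4) + √x))
  have hS : 0 < √(x + 4) + √x := by positivity
  have hsqrt : √(2 * π) = 2 * √(π / 2) := by
    rw [show 2 * π = 2 ^ 2 * (π / 2) by ring, Real.sqrt_mul (by positivity),
      Real.sqrt_sq two_pos.le]
  have hc : c * (√(π / 2) * (√(x + 4) + √x) * exp (x / 2)) = 1 := by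
    have hexp : exp (-(x / 2)) * exp (x / 2) = 1 := by
      rw [← Real.exp_add, neg_add_cancel, Real.exp_zero]
    have : 0 < √(π / 2) := Real.sqrt_pos.mpr (by positivity)
    simp only [c, hsqrt, neg_div]
    field_simp
    linear_combination hexp
  refine pow_le_exp_neg_one (Phi_nonneg _) (Phi_sqrt_le hx) ?_
  rw [← hc]
  exact mul_le_mul_of_nonneg_left hp (by positivity)

lemma rect_bot_const (p : ℕ) (c : ℝ) :
    rect (fun _ : Fin p => (⊥ : EReal)) (fun _ => (c : EReal))
      = Set.univ.pi fun _ => Set.Iic c := by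
  ext x
  simp [rect, Pi.le_def]

lemma stdGaussianPi_rect_bot_const (p : ℕ) (c : ℝ) :
    (stdGaussianPi p (rect (fun _ => ⊥) (fun _ => (c : EReal)))).toReal = Phi c ^ p := by
  rw [rect_bot_const, stdGaussianPi, Measure.pi_pi, ENNReal.toReal_prod]
  simp [Phi]

instance (p : ℕ) : IsProbabilityMeasure (stdGaussianPi p) := by
  unfold stdGaussianPi; infer_instance

lemma abs_toReal_sub_toReal_le_one {a b : ENNReal} (ha : a ≤ 1) (hb : b ≤ 1) :
    |a.toReal - b.toReal| ≤ 1 := by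
  have ha' : a.toReal ≤ 1 := by simpa using ENNReal.toReal_mono ENNReal.one_ne_top ha
  have hb' : b.toReal ≤ 1 := by simpa using ENNReal.toReal_mono ENNReal.one_ne_top hb
  rw [abs_sub_le_iff]
  constructor <;> linarith [a.toReal_nonneg, b.toReal_nonneg]

lemma abs_sub_le_rhoRe {Ω : Type*} [MeasurableSpace Ω] (μ : Measure Ω) [IsProbabilityMeasure μ]
    {p : ℕ} (T : Ω → Fin p → ℝ) (a b : Fin p → EReal) :
    |(μ (T ⁻¹' rect a b)).toReal - (stdGaussianPi p (rect a b)).toReal| ≤ rhoRe μ T := by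
  have hle : ∀ a b : Fin p → EReal,
      |(μ (T ⁻¹' rect a b)).toReal - (stdGaussianPi p (rect a b)).toReal| ≤ 1 :=
    fun a b => abs_toReal_sub_toReal_le_one prob_le_one prob_le_one
  have hbdd : ∀ a, BddAbove (Set.range fun b =>
      |(μ (T ⁻¹' rect a b)).toReal - (stdGaussianPi p (rect a b)).toReal|) :=
    fun a => ⟨1, by rintro _ ⟨b, rfl⟩; exact hle a b⟩
  exact le_ciSup_of_le ⟨1, by rintro _ ⟨a, rfl⟩; exact ciSup_le (hle a)⟩ a (le_ciSup (hbdd a) b)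

theorem statement11_general
    {Ω : Type*} [MeasurableSpace Ω] (μ : Measure Ω) [IsProbabilityMeasure μ]
    (p : ℕ → ℕ)
    (X : (n : ℕ) → Fin n → Ω → Fin (p n) → ℝ)
    -- each `X_{ij}` is Rademacher
    (hdist : ∀ n i j, Measure.map (fun ω => X n i ω j) μ = radMeasure) :
    -- `P(T_n ∈ (−∞, √n]^p) = 1`
    (∀ n : ℕ, μ {ω | ∀ j, (Real.sqrt n)⁻¹ * ∑ i, X n i ω j ≤ Real.sqrt n} = 1) ∧
    -- `[Φ(√n)]^p ≤ [1 − 2e^{−n/2}/(√(2π)(√(n+4)+√n))]^p`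
    (∀ n : ℕ, Phi (Real.sqrt n) ^ p n
      ≤ (1 - 2 * Real.exp (-(n : ℝ) / 2)
            / (Real.sqrt (2 * π) * (Real.sqrt ((n : ℝ) + 4) + Real.sqrt n))) ^ p n) ∧
    -- under the stated growth of `p`:
    ((∀ n : ℕ, Real.sqrt (π / 2) * (Real.sqrt ((n : ℝ) + 4) + Real.sqrt n)
          * Real.exp ((n : ℝ) / 2) ≤ p n) →
      (∀ᶠ n : ℕ in atTop, Phi (Real.sqrt n) ^ p n ≤ 2 / Real.exp 1) ∧
      (∀ᶠ n : ℕ in atTop,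
        1 - 2 / Real.exp 1
          ≤ rhoRe μ (fun ω j => (Real.sqrt n)⁻¹ * ∑ i, X n i ω j))) := by
  have hT : ∀ n : ℕ, μ {ω | ∀ j, (√n)⁻¹ * ∑ i, X n i ω j ≤ √n} = 1 := fun n =>
    measure_setOf_eq_one_of_ae <| by
      filter_upwards [ae_all_iff.2 fun i => ae_all_iff.2 fun j =>
        ae_le_one_of_map_eq_radMeasure (hdist n i j)] with ω hω j
      exact inv_sqrt_mul_sum_le_sqrt fun i => hω i j
  refine ⟨hT, fun n => pow_le_pow_left₀ (Phi_nonneg _) (Phi_sqrt_le n.cast_nonneg) _, fun hp => ?_⟩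
  have hpow : ∀ n : ℕ, Phi √n ^ p n ≤ 2 / exp 1 := fun n => by
    refine (Phi_sqrt_pow_le_exp_neg_one n.cast_nonneg (hp n)).trans ?_
    rw [Real.exp_neg, inv_eq_one_div]
    gcongr
    norm_num
  refine ⟨.of_forall hpow, .of_forall fun n => ?_⟩
  set T : Ω → Fin (p n) → ℝ := fun ω j => (√n)⁻¹ * ∑ i, X n i ω j
  have hset : T ⁻¹' rect (fun _ => ⊥) (fun _ => ((√n : ℝ) : EReal))
      = {ω | ∀ j, (√n)⁻¹ * ∑ i, X n i ω j ≤ √n} := by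
    ext ω
    simp [T, rect]
  calc 1 - 2 / exp 1 ≤ 1 - Phi √n ^ p n := by linarith [hpow n]
    _ ≤ |1 - Phi √n ^ p n| := le_abs_self _
    _ ≤ rhoRe μ T := by
      simpa [hset, hT n, stdGaussianPi_rect_bot_const] using
        abs_sub_le_rhoRe μ T (fun _ => ⊥) (fun _ => ((√n : ℝ) : EReal))

/-- Case (I) in the proof of Theorem 2.3: for iid Rademacher entries and
`A = (−∞, √n]^p`, `P(T_n ∈ A) = 1` while `[Φ(√n)]^p ≤ [1 − 2e^{−n/2}/(√(2π)(√(n+4)+√n))]^p`,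
and if `p ≥ √(π/2)(√(n+4)+√n)e^{n/2}` then `[Φ(√n)]^p ≤ 2/e` for all sufficiently large `n`;
consequently `ρ_{n,𝒜^{re}} ≥ 1 − 2/e` for all sufficiently large `n`. -/
theorem statement11
    {Ω : Type*} [MeasurableSpace Ω] (μ : Measure Ω) [IsProbabilityMeasure μ]
    (p : ℕ → ℕ)
    (X : (n : ℕ) → Fin n → Ω → Fin (p n) → ℝ)
    (hmeas : ∀ n i, Measurable (X n i))
    -- the `X_{ij}` are independent across `i` and `j`
    (hindep : ∀ n, iIndepFun
      (fun ij : Fin n × Fin (p n) => fun ω => X n ij.1 ω ij.2) μ)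
    -- each `X_{ij}` is Rademacher
    (hdist : ∀ n i j, Measure.map (fun ω => X n i ω j) μ = radMeasure) :
    -- `P(T_n ∈ (−∞, √n]^p) = 1`
    (∀ n : ℕ, μ {ω | ∀ j, (Real.sqrt n)⁻¹ * ∑ i, X n i ω j ≤ Real.sqrt n} = 1) ∧
    -- `[Φ(√n)]^p ≤ [1 − 2e^{−n/2}/(√(2π)(√(n+4)+√n))]^p`
    (∀ n : ℕ, Phi (Real.sqrt n) ^ p n
      ≤ (1 - 2 * Real.exp (-(n : ℝ) / 2)
            / (Real.sqrt (2 * π) * (Real.sqrt ((n : ℝ) + 4) + Real.sqrt n))) ^ p n) ∧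
    -- under the stated growth of `p`:
    ((∀ n : ℕ, Real.sqrt (π / 2) * (Real.sqrt ((n : ℝ) + 4) + Real.sqrt n)
          * Real.exp ((n : ℝ) / 2) ≤ p n) →
      (∀ᶠ n : ℕ in atTop, Phi (Real.sqrt n) ^ p n ≤ 2 / Real.exp 1) ∧
      (∀ᶠ n : ℕ in atTop,
        1 - 2 / Real.exp 1
          ≤ rhoRe μ (fun ω j => (Real.sqrt n)⁻¹ * ∑ i, X n i ω j))) :=
  statement11_general μ p X hdist
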